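/- arXiv:1409.3212 — 2 statements merged into one kernel-verified Lean document; each statement's English description precedes it below -/
import Mathlib

section
/- For every integer m ≥ 1, the matrix U_m is positive definite; that is, every eigenvalue of U_m is strictly positive (equivalently, xᵀ U_m x > 0 for every nonzero x ∈ ℝ^m). -/
/-- `U m` is the `m × m` real symmetric matrix with `(U m) 0 0 = 1`,
diagonal entries `5` elsewhere, entries `2` on the sub- and super-diagonal,
and `0` otherwise. -/
def U (m : ℕ) : Matrix (Fin m) (Fin m) ℝ := fun i j =>
  if i = j then (if (i : ℕ) = 0 then 1 else 5)
  else if (i : ℕ) + 1 = (j : ℕ) ∨ (j : ℕ) + 1 = (i : ℕ) then 2 else 0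

/-!
`U m = Bᵀ B` for the upper bidiagonal matrix `B` with `1` on the diagonal and `2` on the
superdiagonal (its Cholesky factor). `B` is upper triangular with determinant `1`, so
`B *ᵥ ·` is injective and `Bᵀ B` is positive definite.
-/

open Matrix

theorem Fin.sum_ite_val_add_one_eq {M : Type*} [AddCommMonoid M] {m : ℕ} (k : Fin m)
    (f : Fin m → M) :
    ∑ i : Fin m, (if (i : ℕ) + 1 = k then f i else 0) =
      if h : (k : ℕ) = 0 then 0 else f ⟨k - 1, by omega⟩ := by
  split_ifs with hk
  · exact Finset.sum_eq_zero fun i _ => if_neg (by omega)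
  · rw [Finset.sum_eq_single ⟨k - 1, by omega⟩
      (fun i _ hi => if_neg fun h => hi (Fin.ext (by simp only; omega))) (by simp)]
    simp only [if_pos (show k - 1 + 1 = (k : ℕ) by omega)]

def upperBidiagonal {R : Type*} [Zero R] (m : ℕ) (a b : R) : Matrix (Fin m) (Fin m) R :=
  fun i j => if i = j then a else if (i : ℕ) + 1 = j then b else 0

section CommRing

variable {R : Type*} [CommRing R] {m : ℕ} (a b : R)

theorem upperBidiagonal_isUpperTriangular : (upperBidiagonal m a b).IsUpperTriangular := by
  intro i j hji
  simp only [id, Fin.lt_def] at hji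
  simp only [upperBidiagonal, Fin.ext_iff]
  rw [if_neg (by omega), if_neg (by omega)]

theorem det_upperBidiagonal : (upperBidiagonal m a b).det = a ^ m := by
  simp [det_of_isUpperTriangular (upperBidiagonal_isUpperTriangular a b), upperBidiagonal]

theorem upperBidiagonal_apply_eq_add (i j : Fin m) :
    upperBidiagonal m a b i j = (if i = j then a else 0) + (if (i : ℕ) + 1 = j then b else 0) := by
  simp only [upperBidiagonal, Fin.ext_iff]
  split_ifs <;> first | omega | simp

theorem transpose_mul_upperBidiagonal_apply (j k : Fin m) :
    ((upperBidiagonal m a b)ᵀ * upperBidiagonal m a b) j k =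
      if j = k then (if (j : ℕ) = 0 then a ^ 2 else a ^ 2 + b ^ 2)
      else if (j : ℕ) + 1 = k ∨ (k : ℕ) + 1 = j then a * b else 0 := by
  simp only [mul_apply, transpose_apply, upperBidiagonal_apply_eq_add, add_mul, mul_add,
    Finset.sum_add_distrib, ite_mul, zero_mul, Finset.sum_ite_eq', Finset.mem_univ, if_true,
    Fin.sum_ite_val_add_one_eq]
  simp only [Fin.ext_iff]
  split_ifs <;> first | omega | ring

end CommRing

theorem posDef_conjTranspose_mul_upperBidiagonal {K : Type*} [Field K] [PartialOrder K]
    [StarRing K] [StarOrderedRing K] {m : ℕ} {a : K} (ha : a ≠ 0) (b : K) :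
    ((upperBidiagonal m a b)ᴴ * upperBidiagonal m a b).PosDef := by
  refine PosDef.conjTranspose_mul_self _ (mulVec_injective_iff_isUnit.mpr ?_)
  rw [isUnit_iff_isUnit_det, det_upperBidiagonal]
  exact (pow_ne_zero m ha).isUnit

theorem U_eq_transpose_mul_upperBidiagonal (m : ℕ) :
    U m = (upperBidiagonal m (1 : ℝ) 2)ᵀ * upperBidiagonal m 1 2 := by
  ext j k
  rw [transpose_mul_upperBidiagonal_apply, U]
  split_ifs <;> norm_num

theorem U_posDef_general (m : ℕ) : (U m).PosDef := by
  rw [U_eq_transpose_mul_upperBidiagonal, ← conjTranspose_eq_transpose_of_trivial]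
  exact posDef_conjTranspose_mul_upperBidiagonal one_ne_zero 2

theorem U_posDef (m : ℕ) (hm : 1 ≤ m) : (U m).PosDef :=
  U_posDef_general m
end

section
/- For every integer m ≥ 2, at least m − 1 of the eigenvalues of U_m, counted with multiplicity, are greater than or equal to 1, and at least ⌈m/2⌉ − 1 of the eigenvalues of U_m, counted with multiplicity, are greater than or equal to 5. -/
open Finset

/-!
Write `U m + diag(4, 0, …, 0) = 5 • 1 + V m`. Everything follows from one half of Courant–Fischer:
a subspace on which `t * (x ⬝ᵥ x) ≤ x ⬝ᵥ (A *ᵥ x)` has dimension at most the number of eigenvalues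
of `A` that are `≥ t`. Since `U m` and `5 • 1 + V m` have the same quadratic form on the
hyperplane `x 0 = 0`, passing from `5 • 1 + V m` to `U m` loses at most one eigenvalue above any
threshold. The rows of `|V m|` sum to at most `4`, so `5 • 1 + V m` dominates the identity; and
conjugation by `diag((-1)^i)` turns `V m` into `-V m`, so at least half of the eigenvalues of
`5 • 1 + V m` are `≥ 5`.
-/

open Module Submodule Matrix
open scoped RealInnerProductSpace

namespace OrthonormalBasis

variable {ι E : Type*} [Fintype ι] [NormedAddCommGroup E] [InnerProductSpace ℝ E]
  (b : OrthonormalBasis ι ℝ E) {T : E →ₗ[ℝ] E} {μ : ι → ℝ}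

lemma inner_apply_eq_mul_inner (hT : ∀ i, T (b i) = μ i • b i) (i : ι) (x : E) :
    ⟪b i, T x⟫ = μ i * ⟪b i, x⟫ := by
  classical
  conv_lhs => rw [← b.sum_repr' x]
  simp [map_sum, map_smul, hT, inner_sum, inner_smul_right, b.inner_eq_ite, mul_comm]

lemma inner_apply_self_eq_sum (hT : ∀ i, T (b i) = μ i • b i) (x : E) :
    ⟪x, T x⟫ = ∑ i, μ i * ⟪b i, x⟫ ^ 2 := by
  rw [← b.sum_inner_mul_inner]
  refine sum_congr rfl fun i _ => ?_
  rw [b.inner_apply_eq_mul_inner hT, real_inner_comm]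
  ring

lemma inner_eq_zero_of_mem_span_image {s : Set ι} {x : E} (hx : x ∈ span ℝ (b '' s)) {i : ι}
    (hi : i ∉ s) : ⟪b i, x⟫ = 0 := by
  classical
  suffices span ℝ (b '' s) ≤ (ℝ ∙ b i)ᗮ from
    (mem_orthogonal_singleton_iff_inner_right).mp (this hx)
  rw [span_le]
  rintro _ ⟨j, hj, rfl⟩
  rw [SetLike.mem_coe, mem_orthogonal_singleton_iff_inner_right, b.inner_eq_ite,
    if_neg (ne_of_mem_of_not_mem hj hi).symm]

lemma finrank_span_image_setOf (p : ι → Prop) [DecidablePred p] :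
    finrank ℝ (span ℝ (b '' {i | p i})) = #{i | p i} := by
  rw [Set.image_eq_range]
  exact (finrank_span_eq_card (b.orthonormal.linearIndependent.comp _
    Subtype.val_injective)).trans (Fintype.card_subtype p)

variable {b} {t : ℝ}

lemma inner_apply_self_lt_of_mem_span (hT : ∀ i, T (b i) = μ i • b i) {x : E}
    (hx : x ∈ span ℝ (b '' {i | μ i < t})) (hx0 : x ≠ 0) : ⟪x, T x⟫ < t * ‖x‖ ^ 2 := by
  have hc : ∀ i, ¬ μ i < t → ⟪b i, x⟫ = 0 := fun i hi =>
    b.inner_eq_zero_of_mem_span_image hx (by simpa using hi)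
  obtain ⟨j, hj⟩ : ∃ j, ⟪b j, x⟫ ≠ 0 := by
    by_contra! h
    rw [← b.sum_repr' x] at hx0
    simp [h] at hx0
  rw [b.inner_apply_self_eq_sum hT, ← b.sum_sq_inner_right, mul_sum]
  refine sum_lt_sum (fun i _ => ?_) ⟨j, mem_univ j, ?_⟩
  · by_cases hi : μ i < t
    · exact mul_le_mul_of_nonneg_right hi.le (sq_nonneg _)
    · simp [hc i hi]
  · have hμj : μ j < t := by_contra fun h => hj (hc j h)
    exact mul_lt_mul_of_pos_right hμj (by positivity)

lemma le_inner_apply_self_of_mem_span (hT : ∀ i, T (b i) = μ i • b i) {x : E}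
    (hx : x ∈ span ℝ (b '' {i | t ≤ μ i})) : t * ‖x‖ ^ 2 ≤ ⟪x, T x⟫ := by
  rw [b.inner_apply_self_eq_sum hT, ← b.sum_sq_inner_right, mul_sum]
  refine sum_le_sum fun i _ => ?_
  by_cases hi : t ≤ μ i
  · exact mul_le_mul_of_nonneg_right hi (sq_nonneg _)
  · simp [b.inner_eq_zero_of_mem_span_image hx (by simpa using hi)]

theorem finrank_le_card_of_forall_le_inner (hT : ∀ i, T (b i) = μ i • b i)
    (W : Submodule ℝ E) (hW : ∀ x ∈ W, t * ‖x‖ ^ 2 ≤ ⟪x, T x⟫) :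
    finrank ℝ W ≤ #{i | t ≤ μ i} := by
  have : FiniteDimensional ℝ E := .of_basis b.toBasis
  have hdisj : Disjoint (span ℝ (b '' {i | μ i < t})) W := by
    refine disjoint_def.mpr fun x hxL hxW => by_contra fun hx0 => ?_
    linarith [inner_apply_self_lt_of_mem_span hT hxL hx0, hW x hxW]
  have hdim := finrank_add_finrank_le_of_disjoint hdisj
  rw [b.finrank_span_image_setOf, finrank_eq_card_basis b.toBasis] at hdim
  have := card_filter_add_card_filter_not (s := univ) (fun i => μ i < t)
  simp only [not_lt, card_univ] at this
  omega

end OrthonormalBasis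

open WithLp

lemma EuclideanSpace.real_norm_sq_eq_dotProduct {n : Type*} [Fintype n]
    (y : EuclideanSpace ℝ n) : ‖y‖ ^ 2 = ofLp y ⬝ᵥ ofLp y := by
  rw [← real_inner_self_eq_norm_sq, EuclideanSpace.inner_eq_star_dotProduct, star_trivial]

namespace Matrix

variable {n : Type*} [Fintype n]

lemma inner_toEuclideanLin_self [DecidableEq n] (A : Matrix n n ℝ) (y : EuclideanSpace ℝ n) :
    ⟪y, toEuclideanLin A y⟫ = ofLp y ⬝ᵥ (A *ᵥ ofLp y) := by
  rw [EuclideanSpace.inner_eq_star_dotProduct, star_trivial, dotProduct_comm, toLpLin_apply,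
    ofLp_toLp]

lemma mulVec_dotProduct_mulVec (P M : Matrix n n ℝ) (x : n → ℝ) :
    (P *ᵥ x) ⬝ᵥ (M *ᵥ (P *ᵥ x)) = x ⬝ᵥ ((Pᵀ * M * P) *ᵥ x) := by
  rw [← mulVec_mulVec, ← mulVec_mulVec, dotProduct_mulVec x Pᵀ, vecMul_transpose]

/-- A Gershgorin-type bound, from `|x i * x j| ≤ (x i ^ 2 + x j ^ 2) / 2`. -/
theorem IsSymm.neg_mul_dotProduct_le {A : Matrix n n ℝ} (hA : A.IsSymm) {r : ℝ}
    (hr : ∀ i, ∑ j, |A i j| ≤ r) (x : n → ℝ) : -(r * (x ⬝ᵥ x)) ≤ x ⬝ᵥ (A *ᵥ x) := by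
  have hsymm : ∑ i, ∑ j, |A i j| * x j ^ 2 = ∑ i, ∑ j, |A i j| * x i ^ 2 := by
    rw [sum_comm]
    simp_rw [hA.apply]
  calc -(r * (x ⬝ᵥ x)) ≤ -∑ i, ∑ j, |A i j| * x i ^ 2 := by
        rw [dotProduct, mul_sum, neg_le_neg_iff]
        gcongr with i
        rw [← sum_mul, ← sq]
        exact mul_le_mul_of_nonneg_right (hr i) (sq_nonneg _)
    _ = ∑ i, ∑ j, -(|A i j| * (x i ^ 2 + x j ^ 2) / 2) := by
        have hsplit : ∀ i j, -(|A i j| * (x i ^ 2 + x j ^ 2) / 2) =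
            -(|A i j| * x i ^ 2) / 2 - |A i j| * x j ^ 2 / 2 := fun _ _ => by ring
        simp only [hsplit, sum_sub_distrib, ← sum_div, sum_neg_distrib, hsymm]
        ring
    _ ≤ ∑ i, ∑ j, x i * (A i j * x j) := by
        gcongr with i _ j
        rcases abs_cases (A i j) with ⟨h, -⟩ | ⟨h, -⟩ <;> rw [h]
        · nlinarith [mul_nonneg (abs_nonneg (A i j)) (sq_nonneg (x i + x j))]
        · nlinarith [mul_nonneg (abs_nonneg (A i j)) (sq_nonneg (x i - x j))]
    _ = x ⬝ᵥ (A *ᵥ x) := by simp [dotProduct, mulVec, mul_sum]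

end Matrix

namespace Matrix.IsHermitian

variable {n : Type*} [Fintype n] [DecidableEq n] {A : Matrix n n ℝ} (hA : A.IsHermitian) {t : ℝ}

lemma toEuclideanLin_eigenvectorBasis (i : n) :
    toEuclideanLin A (hA.eigenvectorBasis i) = hA.eigenvalues i • hA.eigenvectorBasis i := by
  ext1
  simp [toLpLin_apply, hA.mulVec_eigenvectorBasis]

theorem finrank_le_card_le_eigenvalues (W : Submodule ℝ (n → ℝ))
    (hW : ∀ x ∈ W, t * (x ⬝ᵥ x) ≤ x ⬝ᵥ (A *ᵥ x)) :
    finrank ℝ W ≤ #{i | t ≤ hA.eigenvalues i} := by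
  rw [← (WithLp.linearEquiv 2 ℝ (n → ℝ)).symm.finrank_map_eq W]
  refine hA.eigenvectorBasis.finrank_le_card_of_forall_le_inner
    hA.toEuclideanLin_eigenvectorBasis _ ?_
  rintro _ ⟨x, hx, rfl⟩
  rw [EuclideanSpace.real_norm_sq_eq_dotProduct, inner_toEuclideanLin_self]
  exact hW x hx

theorem exists_finrank_eq_card_le_eigenvalues :
    ∃ H : Submodule ℝ (n → ℝ), finrank ℝ H = #{i | t ≤ hA.eigenvalues i} ∧
      ∀ x ∈ H, t * (x ⬝ᵥ x) ≤ x ⬝ᵥ (A *ᵥ x) := by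
  refine ⟨(span ℝ (hA.eigenvectorBasis '' {i | t ≤ hA.eigenvalues i})).map
    (WithLp.linearEquiv 2 ℝ (n → ℝ)).toLinearMap, ?_, ?_⟩
  · rw [LinearEquiv.finrank_map_eq, OrthonormalBasis.finrank_span_image_setOf]
  rintro _ ⟨y, hy, rfl⟩
  rw [LinearEquiv.coe_coe, WithLp.coe_linearEquiv, ← EuclideanSpace.real_norm_sq_eq_dotProduct,
    ← inner_toEuclideanLin_self]
  exact OrthonormalBasis.le_inner_apply_self_of_mem_span hA.toEuclideanLin_eigenvectorBasis hy

theorem exists_finrank_eq_card_eigenvalues_lt :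
    ∃ L : Submodule ℝ (n → ℝ), finrank ℝ L = #{i | hA.eigenvalues i < t} ∧
      ∀ x ∈ L, x ⬝ᵥ (A *ᵥ x) ≤ t * (x ⬝ᵥ x) := by
  refine ⟨(span ℝ (hA.eigenvectorBasis '' {i | hA.eigenvalues i < t})).map
    (WithLp.linearEquiv 2 ℝ (n → ℝ)).toLinearMap, ?_, ?_⟩
  · rw [LinearEquiv.finrank_map_eq, OrthonormalBasis.finrank_span_image_setOf]
  rintro _ ⟨y, hy, rfl⟩
  rw [LinearEquiv.coe_coe, WithLp.coe_linearEquiv, ← EuclideanSpace.real_norm_sq_eq_dotProduct,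
    ← inner_toEuclideanLin_self]
  rcases eq_or_ne y 0 with rfl | hy0
  · simp
  exact (OrthonormalBasis.inner_apply_self_lt_of_mem_span
    hA.toEuclideanLin_eigenvectorBasis hy hy0).le

variable {B : Matrix n n ℝ}

theorem card_le_eigenvalues_add_finrank_le (hB : B.IsHermitian) (K : Submodule ℝ (n → ℝ))
    (hK : ∀ x ∈ K, x ⬝ᵥ (B *ᵥ x) ≤ x ⬝ᵥ (A *ᵥ x)) :
    #{i | t ≤ hB.eigenvalues i} + finrank ℝ K ≤
      #{i | t ≤ hA.eigenvalues i} + Fintype.card n := by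
  obtain ⟨H, hHdim, hH⟩ := hB.exists_finrank_eq_card_le_eigenvalues (t := t)
  have hHK := hA.finrank_le_card_le_eigenvalues (H ⊓ K) fun x hx => (hH x hx.1).trans (hK x hx.2)
  have hsup := (H ⊔ K).finrank_le
  rw [finrank_fintype_fun_eq_card] at hsup
  have := Submodule.finrank_sup_add_finrank_inf_eq H K
  omega

theorem card_eigenvalues_lt_le_card_le_eigenvalues (P : Matrix n n ℝ) (hP : Pᵀ * P = 1)
    (hPA : Pᵀ * A * P = (2 * t) • 1 - A) :
    #{i | hA.eigenvalues i < t} ≤ #{i | t ≤ hA.eigenvalues i} := by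
  obtain ⟨L, hLdim, hL⟩ := hA.exists_finrank_eq_card_eigenvalues_lt (t := t)
  have hP_inj : Function.Injective P.mulVecLin := fun x y hxy => by
    simpa [mulVec_mulVec, hP] using congrArg (Pᵀ *ᵥ ·) hxy
  rw [← hLdim, (L.equivMapOfInjective _ hP_inj).finrank_eq]
  refine hA.finrank_le_card_le_eigenvalues _ ?_
  rintro _ ⟨x, hx, rfl⟩
  have hnorm := mulVec_dotProduct_mulVec P 1 x
  rw [Matrix.mul_one, hP, one_mulVec, one_mulVec] at hnorm
  rw [mulVecLin_apply, hnorm, mulVec_dotProduct_mulVec, hPA, sub_mulVec, smul_mulVec,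
    one_mulVec, dotProduct_sub, dotProduct_smul, smul_eq_mul]
  linarith [hL x hx]

end Matrix.IsHermitian

def V (m : ℕ) : Matrix (Fin m) (Fin m) ℝ := fun i j =>
  if (i : ℕ) + 1 = (j : ℕ) ∨ (j : ℕ) + 1 = (i : ℕ) then 2 else 0

lemma isSymm_V (m : ℕ) : (V m).IsSymm := by
  ext i j
  simp [V, or_comm]

lemma sum_abs_V_le (m : ℕ) (i : Fin m) : ∑ j, |V m i j| ≤ 4 := by
  have hcard : ∀ p : Fin m → Prop, [DecidablePred p] → (∀ j k, p j → p k → j = k) →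
      (#{j | p j} : ℝ) ≤ 1 := fun p _ hp => by
    exact_mod_cast card_le_one.mpr fun j hj k hk => hp j k (by simpa using hj) (by simpa using hk)
  calc ∑ j, |V m i j|
      ≤ ∑ j : Fin m, ((if (i : ℕ) + 1 = j then 2 else 0) +
          (if (j : ℕ) + 1 = i then 2 else 0)) := by
        gcongr with j
        simp only [V]
        split_ifs <;> first | omega | norm_num
    _ = 2 * #{j : Fin m | (i : ℕ) + 1 = j} + 2 * #{j : Fin m | (j : ℕ) + 1 = i} := by
        rw [sum_add_distrib, sum_ite, sum_ite]
        simp [mul_comm]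
    _ ≤ 2 * 1 + 2 * 1 := by
        gcongr <;> exact hcard _ fun j k hj hk => Fin.ext (by omega)
    _ = 4 := by norm_num

lemma U_eq (m : ℕ) [NeZero m] : U m = (5 : ℝ) • 1 + V m - diagonal (Pi.single 0 4) := by
  ext i j
  simp only [U, V, Matrix.sub_apply, Matrix.add_apply, Matrix.smul_apply, one_apply,
    diagonal_apply, Pi.single_apply, Fin.ext_iff, Fin.val_zero]
  split_ifs <;> first | omega | norm_num

lemma dotProduct_U_mulVec (m : ℕ) [NeZero m] (x : Fin m → ℝ) :
    x ⬝ᵥ (U m *ᵥ x) = x ⬝ᵥ (((5 : ℝ) • 1 + V m) *ᵥ x) - 4 * x 0 ^ 2 := by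
  rw [U_eq, sub_mulVec, dotProduct_sub]
  simp [dotProduct, mulVec_diagonal, Pi.single_apply, sq, mul_left_comm]

lemma dotProduct_self_le_dotProduct_smul_one_add_V_mulVec (m : ℕ) (x : Fin m → ℝ) :
    x ⬝ᵥ x ≤ x ⬝ᵥ (((5 : ℝ) • 1 + V m) *ᵥ x) := by
  have := (isSymm_V m).neg_mul_dotProduct_le (sum_abs_V_le m) x
  rw [add_mulVec, smul_mulVec, one_mulVec, dotProduct_add, dotProduct_smul, smul_eq_mul]
  linarith

def altSign (m : ℕ) : Matrix (Fin m) (Fin m) ℝ := diagonal fun i => (-1) ^ (i : ℕ)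

lemma transpose_altSign_mul_altSign (m : ℕ) : (altSign m)ᵀ * altSign m = 1 := by
  simp [altSign, ← pow_add, ← two_mul, pow_mul]

lemma altSign_conj_V (m : ℕ) : (altSign m)ᵀ * V m * altSign m = -V m := by
  ext i j
  simp only [altSign, diagonal_transpose, diagonal_mul, mul_diagonal, V, Matrix.neg_apply]
  split_ifs with h
  · rcases h with h | h <;> simp [← h, pow_succ, mul_right_comm _ (2 : ℝ), ← mul_pow]
  · simp

lemma altSign_conj_smul_one_add_V (m : ℕ) (c : ℝ) :
    (altSign m)ᵀ * (c • 1 + V m) * altSign m = (2 * c) • 1 - (c • 1 + V m) := by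
  rw [Matrix.mul_add, Matrix.add_mul, altSign_conj_V, Matrix.mul_smul, Matrix.smul_mul,
    Matrix.mul_one, transpose_altSign_mul_altSign]
  module

/-- At least `m - 1` of the eigenvalues of `U m` (counted with multiplicity)
are `≥ 1`, and at least `⌈m/2⌉ - 1` of them are `≥ 5`. -/
theorem U_eigenvalue_counts (m : ℕ) (hm : 2 ≤ m) (hU : (U m).IsHermitian) :
    m - 1 ≤ (univ.filter fun i : Fin m => 1 ≤ hU.eigenvalues i).card ∧
      (m + 1) / 2 - 1 ≤ (univ.filter fun i : Fin m => 5 ≤ hU.eigenvalues i).card := by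
  have : NeZero m := ⟨by omega⟩
  have hB : ((5 : ℝ) • 1 + V m).IsHermitian :=
    isHermitian_iff_isSymm.mpr ((isSymm_one.smul 5).add (isSymm_V m))
  let K := LinearMap.ker (LinearMap.proj 0 : (Fin m → ℝ) →ₗ[ℝ] ℝ)
  have hK : finrank ℝ K + 1 = m := by
    rw [Module.Dual.finrank_ker_add_one_of_ne_zero, finrank_fin_fun]
    exact fun h => by simpa using LinearMap.congr_fun h (Pi.single 0 1)
  have hweyl (t : ℝ) : #{i | t ≤ hB.eigenvalues i} ≤ #{i | t ≤ hU.eigenvalues i} + 1 := by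
    have := hU.card_le_eigenvalues_add_finrank_le (t := t) hB K fun x (hx : x 0 = 0) => by
      simp [dotProduct_U_mulVec, hx]
    rw [Fintype.card_fin] at this
    omega
  have h1 : m ≤ #{i | 1 ≤ hB.eigenvalues i} := by
    simpa using hB.finrank_le_card_le_eigenvalues ⊤ fun x _ => by
      simpa using dotProduct_self_le_dotProduct_smul_one_add_V_mulVec m x
  have h5 : #{i | hB.eigenvalues i < 5} ≤ #{i | 5 ≤ hB.eigenvalues i} :=
    hB.card_eigenvalues_lt_le_card_le_eigenvalues (altSign m) (transpose_altSign_mul_altSign m)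
      (altSign_conj_smul_one_add_V m 5)
  have hsplit := card_filter_add_card_filter_not (s := univ) fun i => hB.eigenvalues i < 5
  simp only [not_lt, card_univ, Fintype.card_fin] at hsplit
  have := hweyl 1
  have := hweyl 5
  omega
end
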